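/- Every word in K_{m,n} lies in K₁: if u = e₁x₁⋯e_mx_m p₀ x p₁ x̄ p₂ y₁f₁⋯y_nf_n and v = e₁'x₁⋯e_m'x_m q_x y₁f₁'⋯y_nf_n' with x₁⋯x_m and y₁⋯y_n reduced, x_m ≠ x̄, y₁ ≠ x, all the e, e', p, q, f, f' words idempotent, e_i' avoiding x_i, f_i' avoiding ȳ_i, and q_x avoiding x, then u and v reduce to the same element of FG(X), the Munn tree T_u contains the edge (w, wx) for w = x₁⋯x_m, and T_v does not contain this edge. -/

import Mathlib

/-!
The Munn tree of a concatenation is `T_{ab} = T_a ∪ a·T_b`, and the vertex set of a Munn tree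
is closed under taking prefixes of reduced words. Hence an idempotent `e` that avoids `a`
contributes no vertex whose reduced form starts with `a`. In `v` the tree of `e₁'x₁⋯e_m'x_m`
is the path `x₁⋯x_m` with subtrees hanging off it away from the path, the tree of
`y₁f₁'⋯y_nf_n'` (translated to `x₁⋯x_m`) grows only in the direction `y₁`, and `q_x` avoids
`x`; so no factor reaches `x₁⋯x_m x`. In `u` the factor `p₀ x` reaches it directly, and both
words reduce to `x₁⋯x_m y₁⋯y_n`.
-/

/-- The symmetric alphabet `X^± = X ∪ X̄`, encoded as pairs (letter, sign). -/
abbrev Letter (X : Type) : Type := X × Bool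

/-- Formal inverse of a letter. -/
def linv {X : Type} (a : Letter X) : Letter X := (a.1, !a.2)

/-- `wordInv v` is `v̄`: the reverse of `v` with every letter replaced by its inverse. -/
def wordInv {X : Type} (v : List (Letter X)) : List (Letter X) := v.reverse.map linv

/-- The vertex set of the Munn tree of `w`: reductions of all prefixes of `w` in FG(X). -/
def munn {X : Type} (w : List (Letter X)) : Set (FreeGroup X) :=
  {g | ∃ p : List (Letter X), p <+: w ∧ FreeGroup.mk p = g}

/-- A word represents an idempotent of FIM(X) iff it reduces to 1 in FG(X). -/
def IsIdemWord {X : Type} (w : List (Letter X)) : Prop := FreeGroup.mk w = 1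

/-- A word is reduced iff it has no adjacent mutually inverse letters. -/
def Reduced {X : Type} (w : List (Letter X)) : Prop :=
  List.Chain' (fun a b => b ≠ linv a) w

/-- The Munn tree of `w` contains the edge from (the reduced word) `p` to `p · a`. -/
def EdgeIn {X : Type} (w : List (Letter X)) (p : List (Letter X)) (a : Letter X) : Prop :=
  Reduced (p ++ [a]) ∧ FreeGroup.mk p ∈ munn w ∧ FreeGroup.mk (p ++ [a]) ∈ munn w

/-- An idempotent word avoids `x` iff its Munn tree omits the edge `(ε, x)`. -/
def Avoids {X : Type} (w : List (Letter X)) (x : Letter X) : Prop := ¬ EdgeIn w [] x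

/-- Equality in the free inverse monoid FIM(X): equality of Munn trees. -/
def EqFIM {X : Type} (u v : List (Letter X)) : Prop :=
  FreeGroup.mk u = FreeGroup.mk v ∧ munn u = munn v

/-- The alphabet `X^± ∪ {#}`. -/
abbrev HSym (X : Type) : Type := Letter X ⊕ Unit

/-- The hashSym symbol. -/
def hashSym {X : Type} : HSym X := Sum.inr ()

/-- `encode u v = u # v̄`. -/
def encode {X : Type} (u v : List (Letter X)) : List (HSym X) :=
  u.map Sum.inl ++ hashSym :: (wordInv v).map Sum.inl


instance {T N : Type} [DecidableEq T] [DecidableEq N] : DecidableEq (ContextFreeRule T N) :=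
  fun a b => decidable_of_iff (a.input = b.input ∧ a.output = b.output)
    (by cases a; cases b; simp)

/-- Interleaving `e₁x₁e₂x₂⋯e_mx_m`. -/
def interE {X : Type} (es : List (List (Letter X))) (xs : List (Letter X)) : List (Letter X) :=
  (List.zipWith (fun e x => e ++ [x]) es xs).flatten

/-- Interleaving `y₁f₁y₂f₂⋯y_nf_n`. -/
def interF {X : Type} (ys : List (Letter X)) (fs : List (List (Letter X))) : List (Letter X) :=
  (List.zipWith (fun y f => y :: f) ys fs).flatten

/-- Derivability of a terminal word from a given nonterminal of a grammar. -/
def DerivesFrom {T : Type} (g : ContextFreeGrammar T) (n : g.NT) (w : List T) : Prop :=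
  g.Derives [Symbol.nonterminal n] (w.map Symbol.terminal)


open scoped Pointwise

variable {X : Type}

section Reduced

theorem linv_linv (a : Letter X) : linv (linv a) = a := by
  simp [linv]

theorem mk_cons (a : Letter X) (w : List (Letter X)) :
    FreeGroup.mk (a :: w) = FreeGroup.mk [a] * FreeGroup.mk w := by
  rw [FreeGroup.mul_mk]
  rfl

theorem mk_linv (a : Letter X) : FreeGroup.mk [linv a] = (FreeGroup.mk [a])⁻¹ := by
  simp [FreeGroup.inv_mk, FreeGroup.invRev, linv]

theorem reduced_iff_isReduced {w : List (Letter X)} : Reduced w ↔ FreeGroup.IsReduced w := by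
  have : (fun a b : Letter X => b ≠ linv a) = fun a b => a.1 = b.1 → a.2 = b.2 := by
    funext ⟨a₁, a₂⟩ ⟨b₁, b₂⟩
    cases a₂ <;> cases b₂ <;> simp [linv, eq_comm]
  change List.IsChain _ w ↔ List.IsChain _ w
  rw [this]

theorem Reduced.mk_inj {s t : List (Letter X)} (hs : Reduced s) (ht : Reduced t) :
    FreeGroup.mk s = FreeGroup.mk t ↔ s = t := by
  classical
  refine ⟨fun h => ?_, congrArg _⟩
  rw [← (reduced_iff_isReduced.1 hs).reduce_eq, ← (reduced_iff_isReduced.1 ht).reduce_eq,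
    ← FreeGroup.toWord_mk, h, FreeGroup.toWord_mk]

theorem Reduced.mk_eq_one_iff {s : List (Letter X)} (hs : Reduced s) :
    FreeGroup.mk s = 1 ↔ s = [] := by
  rw [FreeGroup.one_eq_mk, hs.mk_inj List.isChain_nil]

theorem Reduced.append_singleton_or {r : List (Letter X)} (hr : Reduced r) (b : Letter X) :
    Reduced (r ++ [b]) ∨ ∃ r', r = r' ++ [linv b] := by
  obtain rfl | ⟨r', c, rfl⟩ := r.eq_nil_or_concat'
  · exact Or.inl (List.isChain_singleton b)
  by_cases hbc : b = linv c
  · exact Or.inr ⟨r', by rw [hbc, linv_linv]⟩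
  · refine Or.inl (List.isChain_append.2 ⟨hr, List.isChain_singleton b, ?_⟩)
    simpa using hbc

theorem reduced_wordInv {l : List (Letter X)} (h : Reduced l) : Reduced (wordInv l) := by
  change List.IsChain _ (l.reverse.map linv)
  rw [List.isChain_map, List.isChain_reverse]
  exact h.imp fun {a b} hab => by rw [linv_linv]; exact hab.symm

theorem wordInv_cons (a : Letter X) (l : List (Letter X)) :
    wordInv (a :: l) = wordInv l ++ [linv a] := by
  simp [wordInv]

theorem Reduced.wordInv_append_singleton {l : List (Letter X)} (h : Reduced l) {a : Letter X}
    (ha : l.head? ≠ some a) : Reduced (wordInv l ++ [a]) := by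
  rw [← linv_linv a, ← wordInv_cons]
  refine reduced_wordInv (List.isChain_cons.2 ⟨fun b hb => ?_, h⟩)
  rw [linv_linv]
  rintro rfl
  exact ha hb

end Reduced

section Munn

theorem one_mem_munn (w : List (Letter X)) : 1 ∈ munn w :=
  ⟨[], List.nil_prefix, rfl⟩

theorem munn_nil : munn ([] : List (Letter X)) = {1} := by
  ext g
  simp [munn, eq_comm, FreeGroup.one_eq_mk]

theorem munn_mono {w₁ w₂ : List (Letter X)} (h : w₁ <+: w₂) : munn w₁ ⊆ munn w₂ := by
  rintro g ⟨p, hp, rfl⟩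
  exact ⟨p, hp.trans h, rfl⟩

theorem munn_cons (a : Letter X) (w : List (Letter X)) :
    munn (a :: w) = insert 1 (FreeGroup.mk [a] • munn w) := by
  ext g
  simp only [munn, List.prefix_cons_iff, Set.mem_insert_iff, Set.mem_smul_set, Set.mem_ofPred_eq]
  constructor
  · rintro ⟨p, rfl | ⟨t, rfl, ht⟩, rfl⟩
    · exact Or.inl rfl
    · exact Or.inr ⟨_, ⟨t, ht, rfl⟩, (mk_cons a t).symm⟩
  · rintro (rfl | ⟨_, ⟨t, ht, rfl⟩, rfl⟩)
    · exact ⟨[], Or.inl rfl, rfl⟩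
    · exact ⟨a :: t, Or.inr ⟨t, rfl, ht⟩, mk_cons a t⟩

theorem munn_append (w₁ w₂ : List (Letter X)) :
    munn (w₁ ++ w₂) = munn w₁ ∪ FreeGroup.mk w₁ • munn w₂ := by
  induction w₁ with
  | nil =>
    rw [munn_nil, ← FreeGroup.one_eq_mk, one_smul, Set.singleton_union,
      Set.insert_eq_of_mem (one_mem_munn w₂), List.nil_append]
  | cons a w₁ ih =>
    rw [List.cons_append, munn_cons, munn_cons, ih, Set.smul_set_union, smul_smul,
      FreeGroup.mul_mk, Set.insert_union]
    rfl

theorem munn_append_of_isIdemWord {e : List (Letter X)} (he : IsIdemWord e)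
    (w : List (Letter X)) : munn (e ++ w) = munn e ∪ munn w := by
  rw [munn_append, he, one_smul]

theorem Reduced.mk_mem_munn_of_prefix {w s t : List (Letter X)} (hs : Reduced s)
    (hts : t <+: s) (h : FreeGroup.mk s ∈ munn w) : FreeGroup.mk t ∈ munn w := by
  classical
  induction w using List.reverseRecOn generalizing s t with
  | nil =>
    rw [munn_nil, Set.mem_singleton_iff, hs.mk_eq_one_iff] at h
    subst h
    rw [List.prefix_nil.1 hts]
    exact one_mem_munn _
  | append_singleton w b ih =>
    obtain ⟨p, hp, hps⟩ := h
    rcases List.prefix_concat_iff.1 hp with rfl | hp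
    · -- with `r` the reduced form of `w`, `s` is `r ++ [b]` or, if `b` cancels the last letter
      -- of `r`, a prefix of `r`
      set r := (FreeGroup.mk w).toWord
      have hr : Reduced r := reduced_iff_isReduced.2 FreeGroup.isReduced_toWord
      have hrw : FreeGroup.mk r ∈ munn w := ⟨w, List.prefix_refl w, FreeGroup.mk_toWord.symm⟩
      have hps' : FreeGroup.mk (r ++ [b]) = FreeGroup.mk s := by
        rw [← FreeGroup.mul_mk, FreeGroup.mk_toWord, FreeGroup.mul_mk, hps]
      rcases hr.append_singleton_or b with hrb | ⟨r', hr'⟩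
      · rw [hrb.mk_inj hs] at hps'
        subst hps'
        rcases List.prefix_concat_iff.1 hts with rfl | hts
        · exact ⟨w ++ [b], List.prefix_refl _, hps⟩
        · exact munn_mono (List.prefix_append _ _) (ih hr hts hrw)
      · have hs' : s = r' := by
          rw [← hs.mk_inj (hr'.symm ▸ hr : Reduced (r' ++ [linv b])).left_of_append, ← hps',
            hr', ← FreeGroup.mul_mk, ← FreeGroup.mul_mk, mk_linv, inv_mul_cancel_right]
        subst hs'
        exact munn_mono (List.prefix_append _ _)
          (ih hr (hts.trans (hr' ▸ List.prefix_append _ _)) hrw)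
    · exact munn_mono (List.prefix_append _ _) (ih hs hts ⟨p, hp, hps⟩)

theorem Avoids.mk_cons_notMem_munn {w : List (Letter X)} {a : Letter X} (h : Avoids w a)
    {s : List (Letter X)} (hs : Reduced (a :: s)) : FreeGroup.mk (a :: s) ∉ munn w :=
  fun hmem => h ⟨List.isChain_singleton a, one_mem_munn w,
    hs.mk_mem_munn_of_prefix (List.prefix_cons_iff.2 (Or.inr ⟨[], rfl, List.nil_prefix⟩)) hmem⟩

end Munn

section Interleaving

theorem mk_interE {es : List (List (Letter X))} {xs : List (Letter X)}
    (hlen : es.length = xs.length) (hes : ∀ p ∈ es.zip xs, IsIdemWord p.1) :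
    FreeGroup.mk (interE es xs) = FreeGroup.mk xs := by
  induction xs generalizing es with
  | nil => simp [interE]
  | cons x xs ih =>
    obtain _ | ⟨e, es⟩ := es
    · simp at hlen
    have hrest : FreeGroup.mk (interE es xs) = FreeGroup.mk xs :=
      ih (by simpa using hlen) fun p hp => hes p (List.mem_cons_of_mem _ hp)
    have he : FreeGroup.mk e = 1 := hes (e, x) List.mem_cons_self
    simp only [interE, List.zipWith_cons_cons, List.flatten_cons] at hrest ⊢
    rw [← FreeGroup.mul_mk, ← FreeGroup.mul_mk, he, one_mul, hrest, FreeGroup.mul_mk,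
      List.singleton_append]

theorem mk_interF {ys : List (Letter X)} {fs : List (List (Letter X))}
    (hlen : fs.length = ys.length) (hfs : ∀ p ∈ fs.zip ys, IsIdemWord p.1) :
    FreeGroup.mk (interF ys fs) = FreeGroup.mk ys := by
  induction ys generalizing fs with
  | nil => simp [interF]
  | cons y ys ih =>
    obtain _ | ⟨f, fs⟩ := fs
    · simp at hlen
    have hrest : FreeGroup.mk (interF ys fs) = FreeGroup.mk ys :=
      ih (by simpa using hlen) fun p hp => hfs p (List.mem_cons_of_mem _ hp)
    have hf : FreeGroup.mk f = 1 := hfs (f, y) List.mem_cons_self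
    simp only [interF, List.zipWith_cons_cons, List.flatten_cons] at hrest ⊢
    rw [List.cons_append, mk_cons y, ← FreeGroup.mul_mk, hf, one_mul, hrest, ← mk_cons]

theorem mk_append_notMem_munn_interE {es : List (List (Letter X))} {xs s : List (Letter X)}
    (hes : ∀ p ∈ es.zip xs, IsIdemWord p.1 ∧ Avoids p.1 p.2) (hred : Reduced (xs ++ s))
    (hs : s ≠ []) : FreeGroup.mk (xs ++ s) ∉ munn (interE es xs) := by
  induction xs generalizing es with
  | nil =>
    rw [List.nil_append] at hred ⊢
    simpa [interE, munn_nil, hred.mk_eq_one_iff] using hs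
  | cons x xs ih =>
    rw [List.cons_append] at hred ⊢
    have hne : FreeGroup.mk (x :: (xs ++ s)) ≠ 1 :=
      hred.mk_eq_one_iff.not.2 (List.cons_ne_nil _ _)
    obtain _ | ⟨e, es⟩ := es
    · simpa [interE, munn_nil] using hne
    obtain ⟨he, hex⟩ := hes (e, x) List.mem_cons_self
    have hrest : interE (e :: es) (x :: xs) = e ++ x :: interE es xs := by simp [interE]
    rw [hrest, munn_append_of_isIdemWord he, munn_cons]
    rintro (hmem | hmem | hmem)
    · exact hex.mk_cons_notMem_munn hred hmem
    · exact hne hmem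
    · rw [Set.mem_smul_set_iff_inv_smul_mem, smul_eq_mul, mk_cons x (xs ++ s),
        inv_mul_cancel_left] at hmem
      exact ih (fun p hp => hes p (List.mem_cons_of_mem _ hp)) hred.of_cons hmem

theorem mk_notMem_munn_interF {ys s : List (Letter X)} {fs : List (List (Letter X))}
    (hfs : ∀ p ∈ fs.zip ys, IsIdemWord p.1 ∧ Avoids p.1 (linv p.2))
    (hred : Reduced (wordInv ys ++ s)) (hs : s ≠ []) : FreeGroup.mk s ∉ munn (interF ys fs) := by
  have hne : FreeGroup.mk s ≠ 1 := (Reduced.mk_eq_one_iff hred.right_of_append).not.2 hs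
  induction ys generalizing fs s with
  | nil => simpa [interF, munn_nil] using hne
  | cons y ys ih =>
    obtain _ | ⟨f, fs⟩ := fs
    · simpa [interF, munn_nil] using hne
    obtain ⟨hf, hfy⟩ := hfs (f, y) List.mem_cons_self
    rw [wordInv_cons, List.append_assoc, List.singleton_append] at hred
    have hrest : interF (y :: ys) (f :: fs) = y :: (f ++ interF ys fs) := by simp [interF]
    rw [hrest, munn_cons, munn_append_of_isIdemWord hf]
    rintro (hmem | hmem)
    · exact hne hmem
    rw [Set.mem_smul_set_iff_inv_smul_mem, smul_eq_mul, ← mk_linv, ← mk_cons] at hmem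
    rcases hmem with hmem | hmem
    · exact hfy.mk_cons_notMem_munn hred.right_of_append hmem
    · exact ih (fun p hp => hfs p (List.mem_cons_of_mem _ hp)) hred (List.cons_ne_nil _ _)
        ((Reduced.mk_eq_one_iff hred.right_of_append).not.2 (List.cons_ne_nil _ _)) hmem

end Interleaving

theorem Kmn_subset_K1_general {X : Type}
    (u v : List (Letter X))
    (xs : List (Letter X)) (x : Letter X) (ys : List (Letter X))
    (es fs es' fs' : List (List (Letter X))) (p0 p1 p2 q : List (Letter X))
    (hes_len : es.length = xs.length) (hfs_len : fs.length = ys.length)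
    (hes'_len : es'.length = xs.length) (hfs'_len : fs'.length = ys.length)
    (hredx : Reduced (xs ++ [x])) (hredy : Reduced ys) (hy1 : ys.head? ≠ some x)
    (hes : ∀ e ∈ es, IsIdemWord e)
    (hp0 : IsIdemWord p0) (hp1 : IsIdemWord p1) (hp2 : IsIdemWord p2)
    (hfs : ∀ f ∈ fs, IsIdemWord f)
    (hes' : ∀ p ∈ es'.zip xs, IsIdemWord p.1 ∧ Avoids p.1 p.2)
    (hq : IsIdemWord q) (hqx : Avoids q x)
    (hfs' : ∀ p ∈ fs'.zip ys, IsIdemWord p.1 ∧ Avoids p.1 (linv p.2))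
    (hu : u = interE es xs ++ p0 ++ x :: (p1 ++ linv x :: (p2 ++ interF ys fs)))
    (hv : v = interE es' xs ++ q ++ interF ys fs') :
    FreeGroup.mk u = FreeGroup.mk v ∧ EdgeIn u xs x ∧ ¬ EdgeIn v xs x := by
  have hE := mk_interE hes_len fun p hp => hes p.1 (List.of_mem_zip hp).1
  have hF := mk_interF hfs_len fun p hp => hfs p.1 (List.of_mem_zip hp).1
  have hE' := mk_interE hes'_len fun p hp => (hes' p hp).1
  have hF' := mk_interF hfs'_len fun p hp => (hfs' p hp).1
  have hu₀ : FreeGroup.mk (interE es xs ++ p0) = FreeGroup.mk xs := by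
    rw [← FreeGroup.mul_mk, hE, hp0, mul_one]
  have hv₀ : FreeGroup.mk (interE es' xs ++ q) = FreeGroup.mk xs := by
    rw [← FreeGroup.mul_mk, hE', hq, mul_one]
  have hu' : u = interE es xs ++ p0 ++ [x] ++ (p1 ++ [linv x] ++ (p2 ++ interF ys fs)) := by
    simp [hu]
  refine ⟨?_, ⟨hredx, ⟨_, ⟨_, hu.symm⟩, hu₀⟩, ⟨_, ⟨_, hu'.symm⟩, ?_⟩⟩, ?_⟩
  · simp only [hu', hv, ← FreeGroup.mul_mk, hu₀, hv₀, hF, hF', mk_linv]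
    rw [hp1, hp2]
    group
  · rw [← FreeGroup.mul_mk, hu₀, FreeGroup.mul_mk]
  rintro ⟨-, -, hmem⟩
  rw [hv, munn_append, munn_append, hE', hv₀] at hmem
  rcases hmem with (hmem | hmem) | hmem
  · exact mk_append_notMem_munn_interE hes' hredx (List.cons_ne_nil _ _) hmem
  all_goals rw [Set.mem_smul_set_iff_inv_smul_mem, smul_eq_mul, ← FreeGroup.mul_mk,
    inv_mul_cancel_left] at hmem
  · exact hqx.mk_cons_notMem_munn (List.isChain_singleton x) hmem
  · exact mk_notMem_munn_interF hfs' (hredy.wordInv_append_singleton hy1)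
      (List.cons_ne_nil _ _) hmem

/-- Every word of `K_{m,n}` lies in `K₁`: with `u` and `v` factored as prescribed,
`u =_{FG(X)} v`, the Munn tree `T_u` contains the edge `(w, wx)` where `w = x₁⋯x_m`,
and `T_v` does not contain this edge. -/
theorem Kmn_subset_K1 {X : Type} [Fintype X]
    (u v : List (Letter X))
    (xs : List (Letter X)) (x : Letter X) (ys : List (Letter X))
    (es fs es' fs' : List (List (Letter X))) (p0 p1 p2 q : List (Letter X))
    (hes_len : es.length = xs.length) (hfs_len : fs.length = ys.length)
    (hes'_len : es'.length = xs.length) (hfs'_len : fs'.length = ys.length)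
    (hredx : Reduced (xs ++ [x])) (hredy : Reduced ys) (hy1 : ys.head? ≠ some x)
    (hes : ∀ e ∈ es, IsIdemWord e)
    (hp0 : IsIdemWord p0) (hp1 : IsIdemWord p1) (hp2 : IsIdemWord p2)
    (hfs : ∀ f ∈ fs, IsIdemWord f)
    (hes' : ∀ p ∈ es'.zip xs, IsIdemWord p.1 ∧ Avoids p.1 p.2)
    (hq : IsIdemWord q) (hqx : Avoids q x)
    (hfs' : ∀ p ∈ fs'.zip ys, IsIdemWord p.1 ∧ Avoids p.1 (linv p.2))
    (hu : u = interE es xs ++ p0 ++ x :: (p1 ++ linv x :: (p2 ++ interF ys fs)))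
    (hv : v = interE es' xs ++ q ++ interF ys fs') :
    FreeGroup.mk u = FreeGroup.mk v ∧ EdgeIn u xs x ∧ ¬ EdgeIn v xs x :=
  Kmn_subset_K1_general u v xs x ys es fs es' fs' p0 p1 p2 q hes_len hfs_len hes'_len hfs'_len hredx
    hredy hy1 hes hp0 hp1 hp2 hfs hes' hq hqx hfs' hu hv
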